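/- Let G be a finite graph-directed matrix product system in which every transition matrix T(e) has a strictly positive entry in every column (as holds for the transition graph of an IFS satisfying the finite neighbour condition). Fix n ∈ ℕ. Then there exist constants a, b > 0, depending only on n and the system, such that for every finite path γ of length at least n, writing γ = ηγ' where η is the prefix of length n, one has a·‖T(γ')‖ ≤ ‖T(γ)‖ ≤ b·‖T(γ')‖. -/

import Mathlib

open Filter Topology

/-- A graph-directed matrix product system: a finite directed graph (multiple
edges allowed) with a dimension for each vertex, a non-negative transition
matrix for each edge (encoded as a block of a big matrix indexed by
`(v : V) × Fin (dim v)`, supported on the `(src e, tgt e)` block), and a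
weight `W e ∈ (0,1)` for each edge. -/
structure GMPS where
  V : Type
  E : Type
  [fintV : Fintype V]
  [decV : DecidableEq V]
  [fintE : Fintype E]
  [decE : DecidableEq E]
  src : E → V
  tgt : E → V
  dim : V → ℕ
  dim_pos : ∀ v, 0 < dim v
  T : E → Matrix ((v : V) × Fin (dim v)) ((v : V) × Fin (dim v)) ℝ
  T_nonneg : ∀ e i j, 0 ≤ T e i j
  T_block : ∀ e i j, T e i j ≠ 0 → i.1 = src e ∧ j.1 = tgt e
  W : E → ℝ
  W_pos : ∀ e, 0 < W e
  W_lt_one : ∀ e, W e < 1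

attribute [instance] GMPS.fintV GMPS.decV GMPS.fintE GMPS.decE

namespace GMPS

variable (G : GMPS)

/-- The global index type for the block matrices. -/
abbrev Idx := (v : G.V) × Fin (G.dim v)

/-- A finite sequence of edges is a path when consecutive edges are compatible. -/
def IsPath (l : List G.E) : Prop := l.Chain' fun e e' => G.tgt e = G.src e'

/-- A (nonempty) path starts at the source of its first edge. -/
def startsAt (l : List G.E) (v : G.V) : Prop := ∃ e, l.head? = some e ∧ G.src e = v

/-- A (nonempty) path ends at the target of its last edge. -/
def endsAt (l : List G.E) (v : G.V) : Prop := ∃ e, l.getLast? = some e ∧ G.tgt e = v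

/-- `l` is a (nonempty) path from `v₁` to `v₂`. -/
def PathFrom (l : List G.E) (v₁ v₂ : G.V) : Prop :=
  G.IsPath l ∧ G.startsAt l v₁ ∧ G.endsAt l v₂

/-- The underlying graph is strongly connected. -/
def StronglyConnected : Prop := ∀ v₁ v₂ : G.V, ∃ l, G.PathFrom l v₁ v₂

/-- The product `T(e₁) ⋯ T(eₙ)` of the transition matrices along a path. -/
noncomputable def Tp (l : List G.E) : Matrix G.Idx G.Idx ℝ := (l.map G.T).prod

/-- The product `W(e₁) ⋯ W(eₙ)` of the weights along a path. -/
def Wp (l : List G.E) : ℝ := (l.map G.W).prod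

/-- The norm of a matrix: the sum of its entries. -/
noncomputable def mnorm (M : Matrix G.Idx G.Idx ℝ) : ℝ := ∑ i, ∑ j, M i j

/-- `Σ_t`: the paths `η` with `W(η) < t ≤ W(η⁻)` and `‖T(η)‖ > 0`. -/
def SigmaT (t : ℝ) : Set (List G.E) :=
  {l | G.IsPath l ∧ l ≠ [] ∧ G.Wp l < t ∧ t ≤ G.Wp l.dropLast ∧ 0 < G.mnorm (G.Tp l)}

/-- `H` is an irreducibility family: for all vertices `v₁, v₂` and all indices
`i ≤ d(v₁)`, `j ≤ d(v₂)` there is `γ ∈ H` from `v₁` to `v₂` with `T(γ)_{i,j} > 0`. -/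
def IrredFamily (H : Finset (List G.E)) : Prop :=
  ∀ (v₁ v₂ : G.V) (i : Fin (G.dim v₁)) (j : Fin (G.dim v₂)),
    ∃ γ ∈ H, G.PathFrom γ v₁ v₂ ∧ 0 < G.Tp γ ⟨v₁, i⟩ ⟨v₂, j⟩

/-- The matrix product system is irreducible. -/
def Irreducible : Prop := ∃ H : Finset (List G.E), G.IrredFamily H

/-- An infinite path in the graph. -/
def IsInfPath (γ : ℕ → G.E) : Prop := ∀ n, G.tgt (γ n) = G.src (γ (n + 1))

/-- The prefix `γ|n` of an infinite path. -/
def pfx (γ : ℕ → G.E) (n : ℕ) : List G.E := (List.range n).map γ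

/-- The quotient `log ‖T(γ|n)‖ / log W(γ|n)` whose `liminf`/`limsup`/limit are
the lower/upper Lyapunov exponent and Lyapunov exponent of `γ`. -/
noncomputable def lyapQ (γ : ℕ → G.E) (n : ℕ) : ℝ :=
  Real.log (G.mnorm (G.Tp (G.pfx γ n))) / Real.log (G.Wp (G.pfx γ n))

/-- `min_{η ∈ Σ_t} log ‖T(η)‖ / log t`. -/
noncomputable def minQ (t : ℝ) : ℝ :=
  sInf ((fun l => Real.log (G.mnorm (G.Tp l)) / Real.log t) '' G.SigmaT t)

/-- `max_{η ∈ Σ_t} log ‖T(η)‖ / log t`. -/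
noncomputable def maxQ (t : ℝ) : ℝ :=
  sSup ((fun l => Real.log (G.mnorm (G.Tp l)) / Real.log t) '' G.SigmaT t)

/-- The spectral radius of a (non-negative) square matrix. -/
noncomputable def spr (M : Matrix G.Idx G.Idx ℝ) : ℝ := (spectralRadius ℝ M).toReal

end GMPS

/-
Pairing column sums with row sums, `‖A * B‖ = ∑ₖ (∑ᵢ A i k) * (∑ⱼ B k j)`. For non-negative
matrices this gives `‖A * B‖ ≤ ‖A‖ * ‖B‖`, so prepending an edge `e` multiplies `‖T(γ)‖` by at
most `max ‖T e‖`. Conversely, the non-zero rows of `T(e' :: l)` lie in the block of `src e'`,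
which is the block of `tgt e` when `e :: e' :: l` is a path, and there the column condition
bounds the column sums of `T e` below by some `δ > 0`; so prepending an edge also multiplies
the norm by at least a fixed positive constant. Iterating over the `n` edges of the prefix gives
the two constants as `n`-th powers.
-/

theorem Finite.exists_pos_forall_le {ι : Type*} [Finite ι] {f : ι → ℝ} (hf : ∀ i, 0 < f i) :
    ∃ c, 0 < c ∧ ∀ i, c ≤ f i := by
  cases isEmpty_or_nonempty ι
  · exact ⟨1, one_pos, isEmptyElim⟩
  · obtain ⟨i₀, hi₀⟩ := Finite.exists_min f
    exact ⟨f i₀, hf i₀, hi₀⟩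

section EntrySums

variable {ι : Type*} [Fintype ι]

theorem Matrix.sum_sum_mul (A B : Matrix ι ι ℝ) :
    ∑ i, ∑ j, (A * B) i j = ∑ k, (∑ i, A i k) * ∑ j, B k j := by
  calc ∑ i, ∑ j, (A * B) i j = ∑ i, ∑ k, ∑ j, A i k * B k j := by
        simp only [Matrix.mul_apply]
        exact Finset.sum_congr rfl fun i _ => Finset.sum_comm
    _ = ∑ k, ∑ i, ∑ j, A i k * B k j := Finset.sum_comm
    _ = ∑ k, (∑ i, A i k) * ∑ j, B k j := by simp only [Finset.sum_mul_sum]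

theorem Matrix.sum_sum_mul_le {A B : Matrix ι ι ℝ} (hA : ∀ i j, 0 ≤ A i j)
    (hB : ∀ i j, 0 ≤ B i j) :
    ∑ i, ∑ j, (A * B) i j ≤ (∑ i, ∑ j, A i j) * ∑ i, ∑ j, B i j := by
  rw [Matrix.sum_sum_mul, Finset.sum_comm (f := fun i j => A i j), Finset.sum_mul]
  refine Finset.sum_le_sum fun k _ => mul_le_mul_of_nonneg_left ?_ ?_
  · exact Finset.single_le_sum (fun i _ => Finset.sum_nonneg fun j _ => hB i j)
      (Finset.mem_univ k)
  · exact Finset.sum_nonneg fun i _ => hA i k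

theorem Matrix.mul_sum_sum_le_sum_sum_mul {A B : Matrix ι ι ℝ} {δ : ℝ} (hB : ∀ i j, 0 ≤ B i j)
    (hAB : ∀ k, ∑ j, B k j ≠ 0 → δ ≤ ∑ i, A i k) :
    δ * ∑ i, ∑ j, B i j ≤ ∑ i, ∑ j, (A * B) i j := by
  rw [Matrix.sum_sum_mul, Finset.mul_sum]
  refine Finset.sum_le_sum fun k _ => ?_
  by_cases hk : ∑ j, B k j = 0
  · simp [hk]
  · exact mul_le_mul_of_nonneg_right (hAB k hk) (Finset.sum_nonneg fun j _ => hB k j)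

end EntrySums

namespace GMPS

variable (G : GMPS)

theorem Tp_nil : G.Tp [] = 1 := rfl

theorem Tp_cons (e : G.E) (l : List G.E) : G.Tp (e :: l) = G.T e * G.Tp l := rfl

theorem Tp_nonneg (l : List G.E) (i j : G.Idx) : 0 ≤ G.Tp l i j := by
  induction l generalizing i j with
  | nil => by_cases h : i = j <;> simp [Tp_nil, h]
  | cons e l ih =>
    rw [Tp_cons, Matrix.mul_apply]
    exact Finset.sum_nonneg fun k _ => mul_nonneg (G.T_nonneg e i k) (ih k j)

theorem mnorm_Tp_nonneg (l : List G.E) : 0 ≤ G.mnorm (G.Tp l) :=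
  Finset.sum_nonneg fun i _ => Finset.sum_nonneg fun j _ => G.Tp_nonneg l i j

theorem rowSum_Tp_cons_eq_zero {e : G.E} {l : List G.E} {k : G.Idx} (hk : k.1 ≠ G.src e) :
    ∑ j, G.Tp (e :: l) k j = 0 := by
  rw [Tp_cons]
  refine Finset.sum_eq_zero fun j _ => Finset.sum_eq_zero fun m _ => ?_
  have : G.T e k m = 0 := by
    by_contra h
    exact hk (G.T_block e k m h).1
  simp [this]

theorem exists_pos_le_colSum
    (hcol : ∀ (e : G.E) (j : Fin (G.dim (G.tgt e))),
      ∃ i : Fin (G.dim (G.src e)), 0 < G.T e ⟨G.src e, i⟩ ⟨G.tgt e, j⟩) :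
    ∃ δ, 0 < δ ∧ ∀ (e : G.E) (j : Fin (G.dim (G.tgt e))), δ ≤ ∑ i, G.T e i ⟨G.tgt e, j⟩ := by
  have hpos : ∀ p : (e : G.E) × Fin (G.dim (G.tgt e)), 0 < ∑ i, G.T p.1 i ⟨G.tgt p.1, p.2⟩ := by
    rintro ⟨e, j⟩
    obtain ⟨i, hi⟩ := hcol e j
    exact hi.trans_le <| Finset.single_le_sum (fun k _ => G.T_nonneg e k _) (Finset.mem_univ _)
  obtain ⟨δ, hδ, hle⟩ := Finite.exists_pos_forall_le hpos
  exact ⟨δ, hδ, fun e j => hle ⟨e, j⟩⟩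

theorem exists_pos_mul_mnorm_le_mnorm_Tp_cons
    (hcol : ∀ (e : G.E) (j : Fin (G.dim (G.tgt e))),
      ∃ i : Fin (G.dim (G.src e)), 0 < G.T e ⟨G.src e, i⟩ ⟨G.tgt e, j⟩) :
    ∃ c, 0 < c ∧ ∀ (e : G.E) (l : List G.E), G.IsPath (e :: l) →
      c * G.mnorm (G.Tp l) ≤ G.mnorm (G.Tp (e :: l)) := by
  obtain ⟨δ, hδ, hcolSum⟩ := G.exists_pos_le_colSum hcol
  have hD : 0 ≤ G.mnorm 1 := G.mnorm_Tp_nonneg []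
  -- Dividing by `‖1‖ + 1` covers `l = []`: then `T l = 1` has full support, whereas `T e` only
  -- has the columns of the block of `tgt e`.
  refine ⟨δ / (G.mnorm 1 + 1), by positivity, fun e l hpath => ?_⟩
  cases l with
  | nil =>
    have hsingle : δ ≤ G.mnorm (G.T e) :=
      calc δ ≤ ∑ i, G.T e i ⟨G.tgt e, ⟨0, G.dim_pos _⟩⟩ := hcolSum e _
        _ ≤ ∑ k, ∑ i, G.T e i k :=
          Finset.single_le_sum (fun k _ => Finset.sum_nonneg fun i _ => G.T_nonneg e i k)
            (Finset.mem_univ _)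
        _ = G.mnorm (G.T e) := Finset.sum_comm
    calc δ / (G.mnorm 1 + 1) * G.mnorm (G.Tp []) ≤ δ := by
          rw [Tp_nil, div_mul_eq_mul_div, div_le_iff₀ (by positivity)]
          nlinarith
      _ ≤ G.mnorm (G.Tp [e]) := by simpa [Tp_cons, Tp_nil] using hsingle
  | cons e' l =>
    have hlink : G.tgt e = G.src e' := (List.isChain_cons_cons.mp hpath).1
    have hrows : ∀ k, ∑ j, G.Tp (e' :: l) k j ≠ 0 → δ ≤ ∑ i, G.T e i k := by
      intro k hk
      have hk' : k.1 = G.tgt e := hlink ▸ by_contra fun h => hk (G.rowSum_Tp_cons_eq_zero h)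
      obtain ⟨v, j⟩ := k
      obtain rfl : v = G.tgt e := hk'
      exact hcolSum e j
    calc δ / (G.mnorm 1 + 1) * G.mnorm (G.Tp (e' :: l))
        ≤ δ * G.mnorm (G.Tp (e' :: l)) :=
          mul_le_mul_of_nonneg_right (div_le_self hδ.le (by linarith)) (G.mnorm_Tp_nonneg _)
      _ ≤ G.mnorm (G.Tp (e :: e' :: l)) :=
          Matrix.mul_sum_sum_le_sum_sum_mul (G.Tp_nonneg _) hrows

theorem exists_pos_mnorm_Tp_cons_le :
    ∃ C, 0 < C ∧ ∀ (e : G.E) (l : List G.E), G.mnorm (G.Tp (e :: l)) ≤ C * G.mnorm (G.Tp l) := by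
  obtain ⟨M, hM⟩ := Finite.exists_le fun e => G.mnorm (G.T e)
  refine ⟨max M 1, by positivity, fun e l => ?_⟩
  calc G.mnorm (G.Tp (e :: l)) ≤ G.mnorm (G.T e) * G.mnorm (G.Tp l) :=
        Matrix.sum_sum_mul_le (G.T_nonneg e) (G.Tp_nonneg l)
    _ ≤ max M 1 * G.mnorm (G.Tp l) :=
        mul_le_mul_of_nonneg_right ((hM e).trans (le_max_left _ _)) (G.mnorm_Tp_nonneg l)

theorem pow_mul_mnorm_le_mnorm_Tp_append {c : ℝ} (hc : 0 ≤ c)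
    (hstep : ∀ (e : G.E) (l : List G.E), G.IsPath (e :: l) →
      c * G.mnorm (G.Tp l) ≤ G.mnorm (G.Tp (e :: l))) :
    ∀ {η γ : List G.E}, G.IsPath (η ++ γ) →
      c ^ η.length * G.mnorm (G.Tp γ) ≤ G.mnorm (G.Tp (η ++ γ))
  | [], _, _ => by simp
  | e :: η, γ, hpath =>
    calc c ^ (e :: η).length * G.mnorm (G.Tp γ)
        = c * (c ^ η.length * G.mnorm (G.Tp γ)) := by rw [List.length_cons, pow_succ']; ring
      _ ≤ c * G.mnorm (G.Tp (η ++ γ)) :=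
          mul_le_mul_of_nonneg_left (pow_mul_mnorm_le_mnorm_Tp_append hc hstep hpath.tail) hc
      _ ≤ G.mnorm (G.Tp (e :: η ++ γ)) := hstep e _ hpath

theorem mnorm_Tp_append_le_pow_mul {C : ℝ} (hC : 0 ≤ C)
    (hstep : ∀ (e : G.E) (l : List G.E), G.mnorm (G.Tp (e :: l)) ≤ C * G.mnorm (G.Tp l)) :
    ∀ η γ : List G.E, G.mnorm (G.Tp (η ++ γ)) ≤ C ^ η.length * G.mnorm (G.Tp γ)
  | [], _ => by simp
  | e :: η, γ =>
    calc G.mnorm (G.Tp (e :: η ++ γ))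
        ≤ C * G.mnorm (G.Tp (η ++ γ)) := hstep e _
      _ ≤ C * (C ^ η.length * G.mnorm (G.Tp γ)) :=
          mul_le_mul_of_nonneg_left (mnorm_Tp_append_le_pow_mul hC hstep η γ) hC
      _ = C ^ (e :: η).length * G.mnorm (G.Tp γ) := by rw [List.length_cons, pow_succ']; ring

end GMPS

/-- If every transition matrix has a strictly positive entry in every column
(of its block), then deleting a fixed number `n` of initial edges of a path
changes the norm of the transition matrix product only up to constants
depending on `n`. -/
theorem gmps_drop_prefix_norm_comparable (G : GMPS)
    (hcol : ∀ (e : G.E) (j : Fin (G.dim (G.tgt e))),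
      ∃ i : Fin (G.dim (G.src e)), 0 < G.T e ⟨G.src e, i⟩ ⟨G.tgt e, j⟩)
    (n : ℕ) :
    ∃ a b : ℝ, 0 < a ∧ 0 < b ∧
      ∀ η γ' : List G.E, G.IsPath (η ++ γ') → η.length = n →
        a * G.mnorm (G.Tp γ') ≤ G.mnorm (G.Tp (η ++ γ')) ∧
        G.mnorm (G.Tp (η ++ γ')) ≤ b * G.mnorm (G.Tp γ') := by
  obtain ⟨c, hc, hlower⟩ := G.exists_pos_mul_mnorm_le_mnorm_Tp_cons hcol
  obtain ⟨C, hC, hupper⟩ := G.exists_pos_mnorm_Tp_cons_le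
  refine ⟨c ^ n, C ^ n, pow_pos hc n, pow_pos hC n, fun η γ' hpath hlen => ?_⟩
  subst hlen
  exact ⟨G.pow_mul_mnorm_le_mnorm_Tp_append hc.le hlower hpath,
    G.mnorm_Tp_append_le_pow_mul hC.le hupper η γ'⟩
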